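/- arXiv:2005.06354 — 2 statements merged into one kernel-verified Lean document; each statement's English description precedes it below -/
import Mathlib

section
/- For every m ≥ 1 and every permutation σ of [2m], one has des(σ) = m and xdes(σ) = m if and only if for every i ∈ [2m], σ(i) > i exactly when i is odd. -/
open scoped Classical

namespace KArr

/-- Positive reduction of a word over ℤ: each positive letter is replaced by its
rank among the distinct positive letters of the word; negative letters unchanged. -/
def posReduce (w : List ℤ) : List ℤ :=
  w.map fun x => if 0 < x then ((w.toFinset.filter fun y => 0 < y ∧ y ≤ x).card : ℤ) else x

/-- The set of descents of a word (1-indexed: `i` is a descent iff `w_i > w_{i+1}`). -/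
def desSet (w : List ℤ) : Finset ℕ :=
  (Finset.range w.length).filter fun i => 1 ≤ i ∧ w.getD i 0 < w.getD (i - 1) 0

/-- The number of descents of a word. -/
def desNum (w : List ℤ) : ℕ := (desSet w).card

/-- The subword of positive letters. -/
def posPart (w : List ℤ) : List ℤ := w.filter fun x => decide (0 < x)

/-- A `k`-arrangement of `[n]`: a permutation together with a color in `Fin k`
attached to each fixed point (encoded as a total coloring that is `0` off the
fixed points). -/
abbrev Arrangement (n k : ℕ) :=
  {x : Equiv.Perm (Fin n) × (Fin n → Fin k) // ∀ j, x.1 j ≠ j → (x.2 j : ℕ) = 0}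

/-- The derangement form of a `k`-arrangement: replace each fixed point by the
negative letter recording its color, then positively reduce.  (Color `c : Fin k`
encodes the letter `¬(c+1) = -(c+1)`.) -/
def dfWord {n k : ℕ} (a : Arrangement n k) : List ℤ :=
  posReduce <| (List.finRange n).map fun i =>
    if a.1.1 i = i then -(((a.1.2 i : ℕ) : ℤ) + 1) else ((a.1.1 i : ℕ) : ℤ) + 1

/-- The permutation form of a `k`-arrangement: replace each fixed point whose
color is not `¬k` by the corresponding negative letter, then positively reduce. -/
def pfWord {n k : ℕ} (a : Arrangement n k) : List ℤ :=
  posReduce <| (List.finRange n).map fun i =>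
    if a.1.1 i = i ∧ (a.1.2 i : ℕ) + 1 ≠ k then -(((a.1.2 i : ℕ) : ℤ) + 1)
    else ((a.1.1 i : ℕ) : ℤ) + 1

/-- `fix_i(a)`: the number of fixed points of the base permutation with color `c`. -/
noncomputable def fixCount {n k : ℕ} (a : Arrangement n k) (c : Fin k) : ℕ :=
  Nat.card {i : Fin n // a.1.1 i = i ∧ a.1.2 i = c}

/-- `DEZ(a)`, the descent set of the derangement form. -/
def DEZset {n k : ℕ} (a : Arrangement n k) : Finset ℕ := desSet (dfWord a)

/-- `DES(a)`, the descent set of the permutation form. -/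
def DESset {n k : ℕ} (a : Arrangement n k) : Finset ℕ := desSet (pfWord a)

/-- `dez(a)`, the number of descents of the derangement form. -/
def dez {n k : ℕ} (a : Arrangement n k) : ℕ := desNum (dfWord a)

/-- `des(a)`, the number of descents of the permutation form. -/
def des {n k : ℕ} (a : Arrangement n k) : ℕ := desNum (pfWord a)

/-- `Der(a)`, the derangement part: the positive subword of the derangement form. -/
def Der {n k : ℕ} (a : Arrangement n k) : List ℤ := posPart (dfWord a)

/-- One-line notation of a permutation of `[n]`, as a word over `ℤ` with letters `1,…,n`. -/
def oneLine {n : ℕ} (π : Equiv.Perm (Fin n)) : List ℤ :=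
  (List.finRange n).map fun i => ((π i : ℕ) : ℤ) + 1

/-- A word `w` contains the pattern `p` if some subsequence of `w` of the same
length as `p` is order-isomorphic to `p` (entrywise strict inequalities match). -/
def Contains (w p : List ℤ) : Prop :=
  ∃ s : List ℤ, s.Sublist w ∧ s.length = p.length ∧
    ∀ i j, i < p.length → j < p.length →
      (s.getD i 0 < s.getD j 0 ↔ p.getD i 0 < p.getD j 0)

/-- A word avoids a pattern if it does not contain it. -/
def Avoids (w p : List ℤ) : Prop := ¬ Contains w p


/-- `dez`-word of a permutation: replace each fixed point by `¬1 = -1`,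
then positively reduce (the `1`-arrangement derangement form). -/
def dzWordPerm {n : ℕ} (π : Equiv.Perm (Fin n)) : List ℤ :=
  posReduce <| (List.finRange n).map fun i =>
    if π i = i then (-1 : ℤ) else ((π i : ℕ) : ℤ) + 1

/-- The weak derangement part `Der_k(a)`: the derangement form with all letters `¬k` removed. -/
def wDer {n k : ℕ} (a : Arrangement n k) : List ℤ :=
  (dfWord a).filter fun x => decide (x ≠ -(k : ℤ))

/-- For a word `w` which is a derangement form, position `j` (0-indexed) of `w` is an
excedance of the base permutation iff the letter is positive and exceeds the number
of positive letters among the first `j+1` letters. -/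
def isExcAt (w : List ℤ) (j : ℕ) : Prop :=
  ((((w.take (j + 1)).filter fun x => decide (0 < x)).length : ℤ)) < w.getD j 0

/-- `e_i = E` for the (1-indexed) letter positions `0 ≤ i ≤ m+1` of `w`, with the
boundary conventions `e_0 = e_{m+1} = E`. -/
def slotE (w : List ℤ) (i : ℕ) : Prop :=
  i = 0 ∨ i = w.length + 1 ∨ isExcAt w (i - 1)

/-- `w_i > w_{i+1}` (1-indexed letters) with the conventions `w_0 = w_{m+1} = +∞`;
this is the descent condition attached to slot `i`, `0 ≤ i ≤ m`. -/
def slotGt (w : List ℤ) (i : ℕ) : Prop :=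
  i = 0 ∨ (i < w.length ∧ w.getD i 0 < w.getD (i - 1) 0)

/-- Slot `i` is of type I: `w_i > w_{i+1}` and `(e_i, e_{i+1}) = (E, N)`. -/
def typeI (w : List ℤ) (i : ℕ) : Prop := slotGt w i ∧ slotE w i ∧ ¬ slotE w (i + 1)

/-- Slot `i` is of type II: `w_i ≤ w_{i+1}` and `(e_i, e_{i+1}) = (N, E)`. -/
def typeII (w : List ℤ) (i : ℕ) : Prop := ¬ slotGt w i ∧ ¬ slotE w i ∧ slotE w (i + 1)

/-- Slot `i` is of type III: `w_i ≤ w_{i+1}` and `(e_i, e_{i+1}) ≠ (N, E)`. -/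
def typeIII (w : List ℤ) (i : ℕ) : Prop := ¬ slotGt w i ∧ ¬ (¬ slotE w i ∧ slotE w (i + 1))

/-- Slot `i` is of type IV: `w_i > w_{i+1}` and `(e_i, e_{i+1}) ≠ (E, N)`. -/
def typeIV (w : List ℤ) (i : ℕ) : Prop := slotGt w i ∧ ¬ (slotE w i ∧ ¬ slotE w (i + 1))

/-- The length `s_i` of the `i`-th slot of the word `u` (a derangement form),
where the slot letters are the letters equal to `c` (`= ¬k`). -/
def slotLen (u : List ℤ) (c : ℤ) (i : ℕ) : ℕ :=
  let L := (List.range u.length).filter fun j => decide (u.getD j 0 ≠ c)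
  (if i < L.length then L.getD i 0 else u.length) - (if i = 0 then 0 else L.getD (i - 1) 0 + 1)

/-- The number of peaks of a word: indices `i` (1-indexed, `2 ≤ i ≤ n-1`)
with `w_{i-1} < w_i > w_{i+1}`. -/
def peakNum (w : List ℤ) : ℕ :=
  ((List.range w.length).filter fun i => decide (0 < i ∧ i + 1 < w.length ∧
    w.getD (i - 1) 0 < w.getD i 0 ∧ w.getD (i + 1) 0 < w.getD i 0)).length

/-- Number of fixed points of a permutation. -/
noncomputable def fixNum {n : ℕ} (π : Equiv.Perm (Fin n)) : ℕ :=
  Nat.card {i : Fin n // π i = i}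

/-- Number of excedances of a permutation. -/
noncomputable def excNum {n : ℕ} (π : Equiv.Perm (Fin n)) : ℕ :=
  Nat.card {i : Fin n // i < π i}

/-- Number of anti-excedances of a permutation. -/
noncomputable def aexcNum {n : ℕ} (π : Equiv.Perm (Fin n)) : ℕ :=
  Nat.card {i : Fin n // π i < i}

/-- `ldes` of a word: the smallest `i` which is a descent or equals the length
(0 for the empty word). -/
def ldesW (w : List ℤ) : ℕ :=
  (((List.range (w.length + 1)).filter fun i =>
    decide ((1 ≤ i ∧ i < w.length ∧ w.getD i 0 < w.getD (i - 1) 0) ∨ i = w.length))).headD 0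

/-- `rdes` of a word: the length minus the position of the rightmost descent
(`sSup ∅ = 0` when there is no descent). -/
def rdesW (w : List ℤ) : ℕ :=
  w.length - ((List.range w.length).filter fun i =>
    decide (1 ≤ i ∧ w.getD i 0 < w.getD (i - 1) 0)).foldr max 0

/-- Number of crossing descents of a permutation: (1-indexed) descents `i` with
`σ(i) ≥ i+1 ≥ σ(i+1)`. -/
def xdesW (w : List ℤ) : ℕ :=
  ((List.range w.length).filter fun i : ℕ =>
    decide (1 ≤ i ∧ (i : ℤ) + 1 ≤ w.getD (i - 1) 0 ∧ w.getD i 0 ≤ (i : ℤ) + 1)).length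

/-- Number of crossing descents of a permutation. -/
def xdesNum {n : ℕ} (σ : Equiv.Perm (Fin n)) : ℕ := xdesW (oneLine σ)

/-- A height sequence `d` encodes a Dyck path: it is weakly increasing and `d_i ≤ i - 1`
(1-indexed), i.e. `d.getD i 0 ≤ i` (0-indexed). -/
def IsDyck (d : List ℕ) : Prop :=
  List.Pairwise (· ≤ ·) d ∧ ∀ i < d.length, d.getD i 0 ≤ i

/-- Number of hills of a Dyck path: east steps of height equal to their index that
touch the diagonal and are immediately followed by a north step. -/
def hillNum (d : List ℕ) : ℕ :=
  ((List.range d.length).filter fun i => decide (d.getD i 0 = i ∧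
    (i + 1 = d.length ∨ d.getD i 0 < d.getD (i + 1) 0))).length

/-- Number of segments of a Dyck path: maximal runs of at least two consecutive
equal heights (counted by their starting index). -/
def segNum (d : List ℕ) : ℕ :=
  ((List.range d.length).filter fun i => decide (i + 1 < d.length ∧
    d.getD i 0 = d.getD (i + 1) 0 ∧ (i = 0 ∨ d.getD (i - 1) 0 ≠ d.getD i 0))).length

/-- `lseg`: the (1-indexed) position of the last step of the leftmost segment,
or `n+1` if there is no segment. -/
def lsegNum (d : List ℕ) : ℕ :=
  (((List.range (d.length + 2)).filter fun i =>
    decide ((2 ≤ i ∧ i ≤ d.length ∧ d.getD (i - 2) 0 = d.getD (i - 1) 0 ∧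
      (i = d.length ∨ d.getD (i - 1) 0 ≠ d.getD i 0)) ∨ i = d.length + 1))).headD 0

/-- Dyck paths of semilength `n`, encoded as monotone functions `Fin n → Fin (n+1)`
bounded by the diagonal (their height sequences). -/
def DyckFinset (n : ℕ) : Finset (Fin n → Fin (n + 1)) :=
  Finset.univ.filter fun f =>
    (∀ i j : Fin n, i ≤ j → f i ≤ f j) ∧ ∀ i : Fin n, (f i : ℕ) ≤ (i : ℕ)

/-- The height sequence of a function `Fin n → Fin (n+1)` as a list. -/
def hList {n : ℕ} (f : Fin n → Fin (n + 1)) : List ℕ :=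
  (List.finRange n).map fun i => (f i : ℕ)

/-!
Reading positions `1, …, 2m` as a binary word with letter `1` at the excedances `σ(i) > i`,
`i` is a crossing descent exactly when the word has the factor `10` at `i, i + 1`. Two such
factors cannot overlap, so there are at most `m` of them, and exactly `m` only for the word
`1010⋯10`. For that word every odd `i` has `σ(i) > i ≥ σ(i+1)` and every even `i` has
`σ(i) ≤ i < σ(i+1)`, so the descents are the `m` odd positions.
-/

open Finset

section Falls

variable (p : ℕ → Prop) [DecidablePred p]

def fallCount (n : ℕ) : ℕ :=
  #{i ∈ range n | 1 ≤ i ∧ p (i - 1) ∧ ¬ p i}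

lemma fallCount_succ (n : ℕ) :
    fallCount p (n + 1) =
      fallCount p n + if 1 ≤ n ∧ p (n - 1) ∧ ¬ p n then 1 else 0 := by
  rw [fallCount, range_add_one, filter_insert]
  split_ifs with h
  · rw [card_insert_of_notMem (by simp), fallCount]
  · rfl

lemma fallCount_add_two (n : ℕ) :
    fallCount p (n + 2) = fallCount p n +
      ((if 1 ≤ n ∧ p (n - 1) ∧ ¬ p n then 1 else 0) +
        if p n ∧ ¬ p (n + 1) then 1 else 0) := by
  simp only [fallCount_succ, Nat.add_sub_cancel, add_assoc]
  congr 3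
  simp

lemma fallCount_add_two_le (n : ℕ) : fallCount p (n + 2) ≤ fallCount p n + 1 := by
  rw [fallCount_add_two]
  -- falls at `n` and `n + 1` would need both `¬ p n` and `p n`
  split_ifs <;> grind

lemma two_mul_fallCount_le (n : ℕ) : 2 * fallCount p n ≤ n := by
  induction n using Nat.twoStepInduction with
  | zero => simp [fallCount]
  | one => simp [fallCount, filter_singleton]
  | more n ih _ => have := fallCount_add_two_le p n; omega

lemma fallCount_eq_iff (m : ℕ) :
    fallCount p (2 * m) = m ↔ ∀ j < 2 * m, (p j ↔ j % 2 = 0) := by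
  induction m with
  | zero => simp [fallCount]
  | succ m ih =>
    have no_fall_at_end (alt : ∀ j < 2 * m, (p j ↔ j % 2 = 0)) :
        ¬ (1 ≤ 2 * m ∧ p (2 * m - 1) ∧ ¬ p (2 * m)) :=
      fun ⟨_, hp, _⟩ => by have := (alt (2 * m - 1) (by omega)).1 hp; omega
    rw [show 2 * (m + 1) = 2 * m + 2 by ring]
    constructor
    · intro h
      have hprev : fallCount p (2 * m) = m := by
        have := two_mul_fallCount_le p (2 * m)
        have := fallCount_add_two_le p (2 * m)
        omega
      have alt := ih.1 hprev
      rw [fallCount_add_two, if_neg (no_fall_at_end alt)] at h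
      have hnew : p (2 * m) ∧ ¬ p (2 * m + 1) := by
        by_contra hc
        rw [if_neg hc] at h
        omega
      intro j hj
      obtain hj | rfl | rfl : j < 2 * m ∨ j = 2 * m ∨ j = 2 * m + 1 := by omega
      · exact alt j hj
      · simp [hnew.1]
      · simp [hnew.2]
    · intro alt
      have hnew : p (2 * m) ∧ ¬ p (2 * m + 1) :=
        ⟨(alt _ (by omega)).2 (by omega), fun h => by have := (alt _ (by omega)).1 h; omega⟩
      rw [fallCount_add_two, if_neg (no_fall_at_end fun j hj => alt j (by omega)), if_pos hnew,
        ih.2 fun j hj => alt j (by omega)]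

end Falls

lemma xdesW_eq_fallCount (w : List ℤ) :
    xdesW w = fallCount (fun j => (j : ℤ) + 1 < w.getD j 0) w.length := by
  rw [xdesW, fallCount, card_def, filter_val, range_val, Multiset.range, Multiset.filter_coe,
    Multiset.coe_card]
  congr 1
  refine List.filter_congr fun i _ => ?_
  by_cases hi : 1 ≤ i
  · simp only [hi, true_and, decide_eq_decide, Nat.cast_sub hi]
    push_cast
    omega
  · simp [hi]

lemma oneLine_length {n : ℕ} (σ : Equiv.Perm (Fin n)) : (oneLine σ).length = n := by
  simp [oneLine]

lemma oneLine_getD {n : ℕ} (σ : Equiv.Perm (Fin n)) (i : ℕ) (h : i < n) :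
    (oneLine σ).getD i 0 = ((σ ⟨i, h⟩ : ℕ) : ℤ) + 1 := by
  simp [oneLine, List.getD_eq_getElem?_getD, h]

lemma xdesNum_eq_iff {m : ℕ} (σ : Equiv.Perm (Fin (2 * m))) :
    xdesNum σ = m ↔ ∀ i : Fin (2 * m), ((i : ℕ) < (σ i : ℕ) ↔ (i : ℕ) % 2 = 0) := by
  simp only [xdesNum, xdesW_eq_fallCount, oneLine_length, fallCount_eq_iff, Fin.forall_iff]
  exact forall_congr' fun i => forall_congr' fun h => by rw [oneLine_getD σ i h]; omega

lemma desSet_oneLine_of_alternating {m : ℕ} (σ : Equiv.Perm (Fin (2 * m)))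
    (h : ∀ i : Fin (2 * m), ((i : ℕ) < (σ i : ℕ) ↔ (i : ℕ) % 2 = 0)) :
    desSet (oneLine σ) = {i ∈ range (2 * m) | 2 ∣ i + 1} := by
  rw [desSet, oneLine_length]
  refine filter_congr fun i hi => ?_
  rw [mem_range] at hi
  rcases Nat.eq_zero_or_pos i with rfl | hpos
  · simp
  have hprev : i - 1 < 2 * m := by omega
  have hne : (σ ⟨i, hi⟩ : ℕ) ≠ σ ⟨i - 1, hprev⟩ := fun heq => by
    have := Fin.mk.inj_iff.1 (σ.injective (Fin.ext heq))
    omega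
  have hcur : i < σ ⟨i, hi⟩ ↔ i % 2 = 0 := h ⟨i, hi⟩
  have hprv : i - 1 < σ ⟨i - 1, hprev⟩ ↔ (i - 1) % 2 = 0 := h ⟨i - 1, hprev⟩
  simp only [oneLine_getD σ _ hi, oneLine_getD σ _ hprev]
  omega

theorem stmt17_general (m : ℕ) (σ : Equiv.Perm (Fin (2 * m))) :
    (desNum (oneLine σ) = m ∧ xdesNum σ = m) ↔
      ∀ i : Fin (2 * m), ((i : ℕ) < (σ i : ℕ) ↔ (i : ℕ) % 2 = 0) := by
  refine ⟨fun h => (xdesNum_eq_iff σ).1 h.2, fun h => ⟨?_, (xdesNum_eq_iff σ).2 h⟩⟩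
  rw [desNum, desSet_oneLine_of_alternating σ h, Nat.card_multiples]
  omega

theorem stmt17 (m : ℕ) (hm : 1 ≤ m) (σ : Equiv.Perm (Fin (2 * m))) :
    (desNum (oneLine σ) = m ∧ xdesNum σ = m) ↔
      ∀ i : Fin (2 * m), ((i : ℕ) < (σ i : ℕ) ↔ (i : ℕ) % 2 = 0) :=
  stmt17_general m σ

end KArr
end

section
/- Every permutation π of [n] with exactly one descent has exactly one crossing descent; that is, if des(π) = 1 then xdes(π) = 1. -/
open scoped Classical

namespace KArr

/-! A permutation with a single descent, at `d`, increases on `[0, d)` and on `[d, n)`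
(positions and values counted from `0`). The `d + 1` distinct values `π 0, …, π (d - 1), π d`
are at most `π (d - 1)`, so `d ≤ π (d - 1)`; the `n - d` values `π d, …, π (n - 1)` lie in
`[π d, n)`, so `π d ≤ d`. Thus `d` is a crossing descent, and it is the only one because every
crossing descent is a descent. -/

section Monotone

variable {f : ℕ → ℕ} {d n : ℕ}

theorem le_apply_sub_one_of_monotoneOn (hf : Function.Injective f)
    (hmono : MonotoneOn f (Set.Ico 0 d)) (hdesc : f d < f (d - 1)) :
    d ≤ f (d - 1) := by
  have hmaps : Set.MapsTo f (Finset.range (d + 1)) (Finset.range (f (d - 1) + 1)) := by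
    intro j hj
    simp only [Finset.coe_range, Set.mem_Iio] at hj ⊢
    rcases Nat.lt_succ_iff_lt_or_eq.1 hj with hj | rfl
    · exact Nat.lt_succ_of_le (hmono ⟨Nat.zero_le _, hj⟩ ⟨Nat.zero_le _, by omega⟩ (by omega))
    · omega
  simpa using Finset.card_le_card_of_injOn f hmaps hf.injOn

theorem apply_le_of_monotoneOn (hf : Function.Injective f)
    (hmono : MonotoneOn f (Set.Ico d n)) (hlt : ∀ i < n, f i < n) (hd : d < n) :
    f d ≤ d := by
  have hmaps : Set.MapsTo f (Finset.Ico d n) (Finset.Ico (f d) n) := by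
    intro j hj
    simp only [Finset.coe_Ico, Set.mem_Ico] at hj ⊢
    exact ⟨hmono (Set.left_mem_Ico.2 hd) hj hj.1, hlt j hj.2⟩
  have := Finset.card_le_card_of_injOn f hmaps hf.injOn
  simp only [Nat.card_Ico] at this
  have := hlt d hd
  omega

end Monotone

section OneLine

variable {n : ℕ} (π : Equiv.Perm (Fin n))

abbrev natPerm : Equiv.Perm ℕ := π.extendDomain Fin.equivSubtype

theorem natPerm_apply_of_lt {i : ℕ} (hi : i < n) : natPerm π i = π ⟨i, hi⟩ := by
  rw [Equiv.Perm.extendDomain_apply_subtype (p := (· < n)) _ _ hi]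
  rfl

theorem natPerm_lt {i : ℕ} (hi : i < n) : natPerm π i < n := by
  rw [natPerm_apply_of_lt π hi]
  exact Fin.is_lt _

theorem length_oneLine : (oneLine π).length = n := by simp [oneLine]

theorem getD_oneLine {i : ℕ} (hi : i < n) : (oneLine π).getD i 0 = natPerm π i + 1 := by
  simp [oneLine, hi, natPerm_apply_of_lt π hi]

theorem mem_desSet_oneLine {i : ℕ} :
    i ∈ desSet (oneLine π) ↔ i < n ∧ 1 ≤ i ∧ natPerm π i < natPerm π (i - 1) := by
  simp only [desSet, Finset.mem_filter, Finset.mem_range, length_oneLine]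
  constructor
  · rintro ⟨hi, h1, hlt⟩
    rw [getD_oneLine π hi, getD_oneLine π (by omega)] at hlt
    exact ⟨hi, h1, by omega⟩
  · rintro ⟨hi, h1, hlt⟩
    rw [getD_oneLine π hi, getD_oneLine π (by omega)]
    exact ⟨hi, h1, by omega⟩

theorem xdesNum_eq_card_filter : xdesNum π = ((Finset.range n).filter fun i =>
    1 ≤ i ∧ i ≤ natPerm π (i - 1) ∧ natPerm π i ≤ i).card := by
  rw [xdesNum, xdesW, length_oneLine, Finset.card_def, Finset.filter_val, Finset.range_val,
    Multiset.range, Multiset.filter_coe, Multiset.coe_card]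
  refine congrArg List.length (List.filter_congr fun i hi => ?_)
  rw [List.mem_range] at hi
  rw [getD_oneLine π hi, getD_oneLine π (by omega)]
  simp only [decide_eq_decide]
  omega

theorem monotoneOn_natPerm_of_notMem_desSet {a b : ℕ} (hb : b ≤ n)
    (h : ∀ i, a < i → i < b → i ∉ desSet (oneLine π)) :
    MonotoneOn (natPerm π) (Set.Ico a b) := by
  refine monotoneOn_of_le_add_one Set.ordConnected_Ico fun i _ hi hi' => ?_
  simp only [Set.mem_Ico] at hi hi'
  have := mt (mem_desSet_oneLine π).2 (h (i + 1) (by omega) hi'.2)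
  simp only [add_tsub_cancel_right, not_and, not_lt] at this
  exact this (by omega) (by omega)

theorem mem_desSet_oneLine_of_crossing {i : ℕ} (hi : i < n) (h1 : 1 ≤ i)
    (hle : i ≤ natPerm π (i - 1)) (hge : natPerm π i ≤ i) : i ∈ desSet (oneLine π) := by
  have hne : natPerm π i ≠ natPerm π (i - 1) := fun he => by
    have := (natPerm π).injective he
    omega
  exact (mem_desSet_oneLine π).2 ⟨hi, h1, by omega⟩

end OneLine

theorem stmt18 (n : ℕ) (π : Equiv.Perm (Fin n)) (h : desNum (oneLine π) = 1) :
    xdesNum π = 1 := by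
  obtain ⟨d, hd⟩ := Finset.card_eq_one.1 h
  have hdes : ∀ i, i ∈ desSet (oneLine π) ↔ i = d := by simp [hd]
  obtain ⟨hdn, hd1, hdesc⟩ := (mem_desSet_oneLine π).1 ((hdes d).2 rfl)
  have hmono : ∀ {a b}, b ≤ n → d ∉ Set.Ioo a b → MonotoneOn (natPerm π) (Set.Ico a b) :=
    fun hb hdab => monotoneOn_natPerm_of_notMem_desSet π hb fun i hai hib hi =>
      hdab ((hdes i).1 hi ▸ ⟨hai, hib⟩)
  have hleft : d ≤ natPerm π (d - 1) :=
    le_apply_sub_one_of_monotoneOn (natPerm π).injective (hmono hdn.le (by simp)) hdesc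
  have hright : natPerm π d ≤ d :=
    apply_le_of_monotoneOn (natPerm π).injective (hmono le_rfl (by simp)) (fun _ => natPerm_lt π)
      hdn
  rw [xdesNum_eq_card_filter, Finset.card_eq_one]
  refine ⟨d, Finset.ext fun i => ?_⟩
  simp only [Finset.mem_filter, Finset.mem_range, Finset.mem_singleton]
  constructor
  · rintro ⟨hi, h1, hle, hge⟩
    exact (hdes i).1 (mem_desSet_oneLine_of_crossing π hi h1 hle hge)
  · rintro rfl
    exact ⟨hdn, hd1, hleft, hright⟩

end KArr
end
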